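/- Let V be a hypergraph on vertex set {1,…,p} (a finite set of nonempty subsets of {1,…,p}). Define a 'move' that replaces a hyperedge of cardinality ≥ 3 using the symmetric-difference operation corresponding to adding the multiset of all nonempty subsets of a 3-element set {a,b,c} (i.e., taking the symmetric difference of the hypergraph with {{a},{b},{c},{a,b},{a,c},{b,c},{a,b,c}}). Then: for any hypergraph Γ containing a set of cardinality ≥ 3, there is a finite sequence of such moves and basis changes (GL(p, F₂) substitutions on the characters) producing a hypergraph all of whose edges have cardinality ≤ 2. -/

import Mathlib

open Finset

/-- The indicator vector in `F₂^p` of a subset of `Fin p`. -/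
def toVec {p : ℕ} (S : Finset (Fin p)) : Fin p → ZMod 2 :=
  fun i => if i ∈ S then 1 else 0

/-- The subset of `Fin p` corresponding to a vector in `F₂^p`. -/
def fromVec {p : ℕ} (v : Fin p → ZMod 2) : Finset (Fin p) :=
  Finset.univ.filter (fun i => v i = 1)

/-- The seven nonempty subsets of `{a, b, c}`. -/
def sevenSets {p : ℕ} (a b c : Fin p) : Finset (Finset (Fin p)) :=
  ({a, b, c} : Finset (Fin p)).powerset.filter (· ≠ ∅)

/-- One step of the algorithm: either take the symmetric difference with the
seven nonempty subsets of some 3-element set `{a,b,c}` (adding the spin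
representation and removing complex summands), or apply a basis change,
i.e. an invertible `F₂`-linear substitution on the characters. -/
def Step {p : ℕ} (Γ Γ' : Finset (Finset (Fin p))) : Prop :=
  (∃ a b c : Fin p, a ≠ b ∧ a ≠ c ∧ b ≠ c ∧ Γ' = symmDiff Γ (sevenSets a b c)) ∨
  (∃ g : (Fin p → ZMod 2) ≃ₗ[ZMod 2] (Fin p → ZMod 2),
    Γ' = Γ.image fun S => fromVec (g (toVec S)))

/-!
Pick an edge `v` with at least three vertices and distinct `a, b, c ∈ v`. The transvection
`x ↦ x + x_c · 𝟙_{v \ {c}}` sends the character `{c}` to `v`, and every other nonempty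
`S ⊆ {a, b, c}` to a set smaller than `v`: `S ⊆ {a, b}` if `c ∉ S`, and `insert c (v \ S)` if
`c ∈ S`. So the move at `{a, b, c}`, conjugated by this basis change, deletes `v` and creates at
most six edges, all smaller than `v`. Hence `∑ 7 ^ |S|` over the edges with `|S| ≥ 3` strictly
decreases, and iterating terminates at a hypergraph with no such edge.
-/

open Relation
open scoped symmDiff

theorem exists_reflTransGen_of_forall_exists_lt {α : Type*} {r : α → α → Prop} {P : α → Prop}
    (f : α → ℕ) (h : ∀ x, ¬ P x → ∃ y, ReflTransGen r x y ∧ f y < f x) (x : α) :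
    ∃ y, ReflTransGen r x y ∧ P y := by
  by_cases hx : P x
  · exact ⟨x, .refl, hx⟩
  obtain ⟨y, hxy, hlt⟩ := h x hx
  obtain ⟨z, hyz, hz⟩ := exists_reflTransGen_of_forall_exists_lt f h y
  exact ⟨z, hxy.trans hyz, hz⟩
termination_by f x

section Indicator

variable {p : ℕ}

theorem fromVec_toVec (S : Finset (Fin p)) : fromVec (toVec S) = S := by
  ext i
  by_cases h : i ∈ S <;> simp [fromVec, toVec, h]

theorem toVec_fromVec (x : Fin p → ZMod 2) : toVec (fromVec x) = x := by
  funext i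
  rcases (by decide : ∀ a : ZMod 2, a = 0 ∨ a = 1) (x i) with h | h <;>
    simp [toVec, fromVec, h]

theorem toVec_symmDiff (A B : Finset (Fin p)) : toVec (A ∆ B) = toVec A + toVec B := by
  funext i
  by_cases hA : i ∈ A <;> by_cases hB : i ∈ B <;>
    simp [toVec, mem_symmDiff, hA, hB, CharTwo.add_self_eq_zero]

def indicatorEquiv (p : ℕ) : Finset (Fin p) ≃ (Fin p → ZMod 2) where
  toFun := toVec
  invFun := fromVec
  left_inv := fromVec_toVec
  right_inv := toVec_fromVec

def basisChange (g : (Fin p → ZMod 2) ≃ₗ[ZMod 2] (Fin p → ZMod 2)) :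
    Equiv.Perm (Finset (Fin p)) :=
  (indicatorEquiv p).symm.permCongr g.toEquiv

theorem basisChange_apply (g : (Fin p → ZMod 2) ≃ₗ[ZMod 2] (Fin p → ZMod 2))
    (S : Finset (Fin p)) : basisChange g S = fromVec (g (toVec S)) := rfl

theorem basisChange_symm (g : (Fin p → ZMod 2) ≃ₗ[ZMod 2] (Fin p → ZMod 2)) :
    (basisChange g).symm = basisChange g.symm := rfl

end Indicator

section Moves

variable {p : ℕ} {a b c : Fin p}

theorem step_basisChange (Γ : Finset (Finset (Fin p)))
    (g : (Fin p → ZMod 2) ≃ₗ[ZMod 2] (Fin p → ZMod 2)) : Step Γ (Γ.image (basisChange g)) :=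
  Or.inr ⟨g, rfl⟩

/-- Conjugate the move at `{a, b, c}` by `g`: change basis by `g⁻¹`, move, change back by `g`. -/
theorem reflTransGen_step_symmDiff_image (Γ : Finset (Finset (Fin p)))
    (g : (Fin p → ZMod 2) ≃ₗ[ZMod 2] (Fin p → ZMod 2)) (hab : a ≠ b) (hac : a ≠ c)
    (hbc : b ≠ c) :
    ReflTransGen Step Γ (Γ ∆ (sevenSets a b c).image (basisChange g)) := by
  have hconj : (Γ.image (basisChange g).symm ∆ sevenSets a b c).image (basisChange g) =
      Γ ∆ (sevenSets a b c).image (basisChange g) := by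
    rw [image_symmDiff _ _ (basisChange g).injective, image_image,
      Equiv.self_comp_symm, image_id]
  have hmove : Step (Γ.image (basisChange g).symm)
      (Γ.image (basisChange g).symm ∆ sevenSets a b c) :=
    Or.inl ⟨a, b, c, hab, hac, hbc, rfl⟩
  refine .head (basisChange_symm g ▸ step_basisChange Γ g.symm) (.head hmove (.single ?_))
  exact hconj ▸ step_basisChange _ g

theorem card_sevenSets_le (a b c : Fin p) : (sevenSets a b c).card ≤ 7 := by
  have h : ({a, b, c} : Finset (Fin p)).card ≤ 3 := card_le_three
  rw [sevenSets, filter_ne', card_erase_of_mem (empty_mem_powerset _), card_powerset]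
  calc 2 ^ ({a, b, c} : Finset (Fin p)).card - 1 ≤ 2 ^ 3 - 1 :=
        Nat.sub_le_sub_right (Nat.pow_le_pow_right two_pos h) 1
    _ = 7 := rfl

end Moves

section Transvection

variable {p : ℕ} {v S : Finset (Fin p)} {a b c : Fin p}

theorem toVec_erase_self (v : Finset (Fin p)) (c : Fin p) : toVec (v.erase c) c = 0 := by
  simp [toVec]

def eraseTransvection (v : Finset (Fin p)) (c : Fin p) :
    (Fin p → ZMod 2) ≃ₗ[ZMod 2] (Fin p → ZMod 2) :=
  LinearEquiv.transvection (f := LinearMap.proj c) (v := toVec (v.erase c))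
    (toVec_erase_self v c)

theorem eraseTransvection_apply (x : Fin p → ZMod 2) :
    eraseTransvection v c x = x + x c • toVec (v.erase c) := rfl

theorem basisChange_eraseTransvection_of_notMem (hcS : c ∉ S) :
    basisChange (eraseTransvection v c) S = S := by
  have : toVec S c = 0 := by simp [toVec, hcS]
  rw [basisChange_apply, eraseTransvection_apply, this, zero_smul, add_zero, fromVec_toVec]

theorem basisChange_eraseTransvection_of_mem (hcS : c ∈ S) :
    basisChange (eraseTransvection v c) S = S ∆ v.erase c := by
  have : toVec S c = 1 := by simp [toVec, hcS]
  rw [basisChange_apply, eraseTransvection_apply, this, one_smul, ← toVec_symmDiff,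
    fromVec_toVec]

theorem basisChange_eraseTransvection_singleton (hc : c ∈ v) :
    basisChange (eraseTransvection v c) {c} = v := by
  rw [basisChange_eraseTransvection_of_mem (mem_singleton_self c),
    (disjoint_singleton_left.2 (notMem_erase c v)).symmDiff_eq_sup]
  exact insert_erase hc

theorem symmDiff_erase_eq_insert_sdiff (hcS : c ∈ S) (hSv : S ⊆ v) :
    S ∆ v.erase c = insert c (v \ S) := by
  ext x
  by_cases hx : x = c
  · subst hx; simp [mem_symmDiff, hcS]
  · by_cases hxS : x ∈ S
    · simp [mem_symmDiff, hx, hxS, hSv hxS]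
    · simp [mem_symmDiff, hx, hxS]

theorem card_basisChange_eraseTransvection_lt (hv : 3 ≤ v.card) (habc : {a, b, c} ⊆ v)
    (hS : S ∈ sevenSets a b c) (hSc : S ≠ {c}) :
    (basisChange (eraseTransvection v c) S).card < v.card := by
  rw [sevenSets, mem_filter, mem_powerset] at hS
  by_cases hcS : c ∈ S
  · have hSv : S ⊆ v := hS.1.trans habc
    have hS2 : 1 < S.card := by
      refine lt_of_le_of_ne (card_pos.2 ⟨c, hcS⟩) fun h => hSc ?_
      obtain ⟨x, rfl⟩ := card_eq_one.1 h.symm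
      rw [mem_singleton.1 hcS]
    rw [basisChange_eraseTransvection_of_mem hcS, symmDiff_erase_eq_insert_sdiff hcS hSv,
      card_insert_of_notMem (fun h => (mem_sdiff.1 h).2 hcS), card_sdiff_of_subset hSv]
    have := card_le_card hSv
    omega
  · rw [basisChange_eraseTransvection_of_notMem hcS]
    have hSab : S ⊆ {a, b} := fun x hx => by
      have := hS.1 hx
      simp only [mem_insert, mem_singleton] at this ⊢
      rcases this with h | h | rfl
      exacts [.inl h, .inr h, absurd hx hcS]
    have := (card_le_card hSab).trans card_le_two
    omega

end Transvection

section Weight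

variable {α : Type*}

theorem sum_symmDiff_lt [DecidableEq α] {Γ D : Finset α} {v : α} (f : α → ℕ) (hvΓ : v ∈ Γ)
    (hvD : v ∈ D) (hD : ∑ T ∈ D.erase v, f T < f v) : ∑ T ∈ Γ ∆ D, f T < ∑ T ∈ Γ, f T := by
  have hsub : Γ ∆ D ⊆ Γ.erase v ∪ D.erase v := by
    intro T hT
    rcases mem_symmDiff.1 hT with ⟨hTΓ, hTD⟩ | ⟨hTD, hTΓ⟩
    · exact mem_union_left _ (mem_erase.2 ⟨fun h => hTD (h ▸ hvD), hTΓ⟩)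
    · exact mem_union_right _ (mem_erase.2 ⟨fun h => hTΓ (h ▸ hvΓ), hTD⟩)
  calc ∑ T ∈ Γ ∆ D, f T ≤ ∑ T ∈ Γ.erase v ∪ D.erase v, f T := sum_le_sum_of_subset hsub
    _ ≤ ∑ T ∈ Γ.erase v, f T + ∑ T ∈ D.erase v, f T := by
      rw [← sum_union_inter]; exact Nat.le_add_right _ _
    _ < ∑ T ∈ Γ.erase v, f T + f v := by gcongr
    _ = ∑ T ∈ Γ, f T := sum_erase_add _ _ hvΓ

/-- With base `7`, one edge outweighs the six smaller edges that replace it in a move. -/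
def weight (S : Finset α) : ℕ := if 3 ≤ S.card then 7 ^ S.card else 0

theorem weight_le_of_card_lt {S T : Finset α} (h : T.card < S.card) :
    weight T ≤ 7 ^ (S.card - 1) := by
  unfold weight
  split_ifs
  · exact Nat.pow_le_pow_right (by norm_num) (by omega)
  · exact Nat.zero_le _

theorem weight_of_three_le_card {S : Finset α} (h : 3 ≤ S.card) :
    weight S = 7 * 7 ^ (S.card - 1) := by
  rw [weight, if_pos h, ← pow_succ', Nat.sub_add_cancel (by omega)]

end Weight

variable {p : ℕ}

def totalWeight (Γ : Finset (Finset (Fin p))) : ℕ := ∑ S ∈ Γ, weight S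

theorem exists_reflTransGen_totalWeight_lt {Γ : Finset (Finset (Fin p))} {v : Finset (Fin p)}
    (hvΓ : v ∈ Γ) (hv : 3 ≤ v.card) :
    ∃ Γ', ReflTransGen Step Γ Γ' ∧ totalWeight Γ' < totalWeight Γ := by
  obtain ⟨a, b, c, ha, hb, hc, hab, hac, hbc⟩ := two_lt_card_iff.1 hv
  have habc : ({a, b, c} : Finset (Fin p)) ⊆ v := by simp [insert_subset_iff, ha, hb, hc]
  set g := eraseTransvection v c
  set D := (sevenSets a b c).image (basisChange g)
  have hcD : {c} ∈ sevenSets a b c := by simp [sevenSets]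
  have hvD : v ∈ D := mem_image.2 ⟨{c}, hcD, basisChange_eraseTransvection_singleton hc⟩
  have hsmall : ∀ T ∈ D.erase v, weight T ≤ 7 ^ (v.card - 1) := by
    rintro T hT
    obtain ⟨hTv, S, hS, rfl⟩ := mem_erase.1 hT |>.imp_right mem_image.1
    have hSc : S ≠ {c} := by
      rintro rfl; exact hTv (basisChange_eraseTransvection_singleton hc)
    exact weight_le_of_card_lt (card_basisChange_eraseTransvection_lt hv habc hS hSc)
  have hcard : (D.erase v).card ≤ 6 := by
    have hD : D.card ≤ 7 := card_image_le.trans (card_sevenSets_le a b c)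
    rw [card_erase_of_mem hvD]; omega
  refine ⟨Γ ∆ D, reflTransGen_step_symmDiff_image Γ g hab hac hbc, sum_symmDiff_lt _ hvΓ hvD ?_⟩
  calc ∑ T ∈ D.erase v, weight T ≤ (D.erase v).card * 7 ^ (v.card - 1) :=
        sum_le_card_nsmul _ _ _ hsmall
    _ ≤ 6 * 7 ^ (v.card - 1) := Nat.mul_le_mul_right _ hcard
    _ < weight v := by
      rw [weight_of_three_le_card hv]
      exact Nat.mul_lt_mul_of_pos_right (by norm_num) (by positivity)

theorem stmt_7_general (p : ℕ) (Γ : Finset (Finset (Fin p))) :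
    ∃ Γ' : Finset (Finset (Fin p)),
      Relation.ReflTransGen Step Γ Γ' ∧ ∀ S ∈ Γ', S.card ≤ 2 := by
  refine exists_reflTransGen_of_forall_exists_lt totalWeight (fun Γ hbig => ?_) Γ
  obtain ⟨v, hvΓ, hv⟩ : ∃ v ∈ Γ, 2 < v.card := by simpa using hbig
  exact exists_reflTransGen_totalWeight_lt hvΓ hv

theorem stmt_7 (p : ℕ) (Γ : Finset (Finset (Fin p)))
    (hne : ∀ S ∈ Γ, S ≠ ∅) (hbig : ∃ S ∈ Γ, 3 ≤ S.card) :
    ∃ Γ' : Finset (Finset (Fin p)),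
      Relation.ReflTransGen Step Γ Γ' ∧ ∀ S ∈ Γ', S.card ≤ 2 :=
  stmt_7_general p Γ
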